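/- arXiv:2202.04894 — 2 statements merged into one kernel-verified Lean document; each statement's English description precedes it below -/
import Mathlib

section
/- For any integer L ≥ 2 and any real y ∈ [0,1], we have ∏_{j=0}^{L-1} |y(L-1) - j| ≤ (L-1)!/4. -/
open Finset

lemma aux_fact (a b : ℕ) (ha : 1 ≤ a) (hb : 1 ≤ b) :
    a.factorial * b.factorial ≤ (a + b - 1).factorial := by
  obtain ⟨b, rfl⟩ : ∃ b', b = b' + 1 := ⟨b - 1, by omega⟩
  have hid := Nat.choose_mul_factorial_mul_factorial (show b ≤ a + b from Nat.le_add_left _ _)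
  have hc : b + 1 ≤ (a + b).choose b := by
    calc b + 1 = (b + 1).choose b := (Nat.choose_succ_self_right b).symm
    _ ≤ (a + b).choose b := Nat.choose_le_choose _ (by omega)
  have h1 : a.factorial * (b + 1).factorial = (b + 1) * (b.factorial * a.factorial) := by
    rw [Nat.factorial_succ]; ring
  have h2 : a + (b + 1) - 1 = a + b := by omega
  have h3 : a + b - b = a := by omega
  rw [h1, h2]
  calc (b + 1) * (b.factorial * a.factorial)
      ≤ (a + b).choose b * (b.factorial * a.factorial) :=
        Nat.mul_le_mul_right _ hc
    _ = (a + b).choose b * b.factorial * (a + b - b).factorial := by rw [h3]; ring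
    _ = (a + b).factorial := hid

theorem stmt_1 (L : ℕ) (hL : 2 ≤ L) (y : ℝ) (hy : y ∈ Set.Icc (0 : ℝ) 1) :
    ∏ j ∈ Finset.range L, |y * ((L : ℝ) - 1) - (j : ℝ)| ≤ (Nat.factorial (L - 1) : ℝ) / 4 := by
  obtain ⟨hy0, hy1⟩ := hy
  set x := y * ((L : ℝ) - 1) with hxdef
  have hL1 : (1 : ℝ) ≤ (L : ℝ) - 1 := by
    have : (2 : ℝ) ≤ (L : ℝ) := by exact_mod_cast hL
    linarith
  have hx0 : 0 ≤ x := mul_nonneg hy0 (by linarith)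
  have hxn : x ≤ (L : ℝ) - 1 := by nlinarith
  set n := L - 1 with hndef
  have hn1 : 1 ≤ n := by omega
  have hnL : (n : ℝ) = (L : ℝ) - 1 := by
    rw [hndef, Nat.cast_sub (by omega)]; norm_num
  set m := min (Nat.floor x) (n - 1) with hmdef
  have hmn : m + 1 ≤ n := by
    have := Nat.min_le_right (Nat.floor x) (n - 1); omega
  have hmfl : m ≤ Nat.floor x := Nat.min_le_left _ _
  have hmx : (m : ℝ) ≤ x := by
    calc (m : ℝ) ≤ (Nat.floor x : ℝ) := by exact_mod_cast hmfl
    _ ≤ x := Nat.floor_le hx0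
  have hxm1 : x ≤ (m : ℝ) + 1 := by
    rcases le_or_gt (Nat.floor x) (n - 1) with h | h
    · have hme : m = Nat.floor x := min_eq_left h
      rw [hme]
      exact le_of_lt (Nat.lt_floor_add_one x)
    · have hme : m = n - 1 := min_eq_right (le_of_lt h)
      have : (m : ℝ) + 1 = (n : ℝ) := by
        rw [hme, Nat.cast_sub (by omega)]; norm_num
      rw [this, hnL]; exact hxn
  set f : ℕ → ℝ := fun j => |x - (j : ℝ)| with hfdef
  have hmL : m ∈ Finset.range L := mem_range.mpr (by omega)
  have hm1L : m + 1 ∈ (Finset.range L).erase m :=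
    mem_erase.mpr ⟨by omega, mem_range.mpr (by omega)⟩
  set t : Finset ℕ := ((Finset.range L).erase m).erase (m + 1) with htdef
  have hsplit : ∏ j ∈ Finset.range L, f j = f m * (f (m + 1) * ∏ j ∈ t, f j) := by
    rw [Finset.mul_prod_erase _ f hm1L, Finset.mul_prod_erase _ f hmL]
  set c : ℕ → ℝ := fun j => if j ≤ m then (m : ℝ) + 1 - j else (j : ℝ) - m with hcdef
  have hcm : c m = 1 := by simp [hcdef]
  have hcm1 : c (m + 1) = 1 := by
    simp only [hcdef]
    rw [if_neg (by omega)]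
    push_cast; ring
  have hfc : ∀ j ∈ t, f j ≤ c j := by
    intro j hj
    simp only [hfdef, hcdef]
    rcases le_or_gt j m with h | h
    · rw [if_pos h, abs_of_nonneg (by
        have : (j : ℝ) ≤ (m : ℝ) := by exact_mod_cast h
        linarith)]
      have : (j : ℝ) ≤ (m : ℝ) := by exact_mod_cast h
      linarith
    · rw [if_neg (by omega), abs_of_nonpos (by
        have : (m : ℝ) + 1 ≤ (j : ℝ) := by exact_mod_cast h
        linarith)]
      have : (m : ℝ) + 1 ≤ (j : ℝ) := by exact_mod_cast h
      linarith
  have hprod_le : ∏ j ∈ t, f j ≤ ∏ j ∈ t, c j :=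
    Finset.prod_le_prod (fun j _ => abs_nonneg _) hfc
  have hc_t : ∏ j ∈ t, c j = ∏ j ∈ Finset.range L, c j := by
    rw [← Finset.mul_prod_erase _ c hmL, ← Finset.mul_prod_erase _ c hm1L, hcm, hcm1]
    ring
  have hc_all : ∏ j ∈ Finset.range L, c j
      = (Nat.factorial (m + 1) : ℝ) * (Nat.factorial (n - m) : ℝ) := by
    rw [show L = (m + 1) + (n - m) by omega, Finset.prod_range_add]
    congr 1
    · have hrefl := Finset.prod_range_reflect (fun j => ((j : ℕ) : ℝ) + 1) (m + 1)
      have h1 : ∏ j ∈ Finset.range (m + 1), c j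
          = ∏ j ∈ Finset.range (m + 1), (((m + 1 - 1 - j : ℕ) : ℝ) + 1) := by
        apply Finset.prod_congr rfl
        intro j hj
        have hjm : j ≤ m := by simpa [Nat.lt_succ_iff] using hj
        simp only [hcdef, if_pos hjm]
        rw [show m + 1 - 1 - j = m - j by omega, Nat.cast_sub hjm]
        ring
      rw [h1]
      rw [show (∏ j ∈ Finset.range (m + 1), (((m + 1 - 1 - j : ℕ) : ℝ) + 1))
          = ∏ j ∈ Finset.range (m + 1), (((j : ℕ) : ℝ) + 1) from hrefl]
      rw [show ∏ j ∈ Finset.range (m + 1), ((j : ℝ) + 1)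
          = ((∏ j ∈ Finset.range (m + 1), (j + 1) : ℕ) : ℝ) by push_cast; rfl]
      rw [Finset.prod_range_add_one_eq_factorial]
    · have h1 : ∏ j ∈ Finset.range (n - m), c (m + 1 + j)
          = ∏ j ∈ Finset.range (n - m), ((j : ℝ) + 1) := by
        apply Finset.prod_congr rfl
        intro j hj
        simp only [hcdef]
        rw [if_neg (by omega)]
        push_cast; ring
      rw [h1]
      rw [show ∏ j ∈ Finset.range (n - m), ((j : ℝ) + 1)
          = ((∏ j ∈ Finset.range (n - m), (j + 1) : ℕ) : ℝ) by push_cast; rfl]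
      rw [Finset.prod_range_add_one_eq_factorial]
  have hpair : f m * f (m + 1) ≤ 1 / 4 := by
    have h1 : f m = x - m := abs_of_nonneg (by linarith)
    have h2 : f (m + 1) = -(x - ((m : ℝ) + 1)) := by
      rw [hfdef]
      push_cast
      exact abs_of_nonpos (by linarith)
    rw [h1, h2]
    nlinarith [sq_nonneg (x - (m : ℝ) - 1 / 2)]
  have hfact : (Nat.factorial (m + 1) : ℝ) * (Nat.factorial (n - m) : ℝ)
      ≤ (Nat.factorial n : ℝ) := by
    have := aux_fact (m + 1) (n - m) (by omega) (by omega)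
    rw [show m + 1 + (n - m) - 1 = n by omega] at this
    exact_mod_cast this
  have hct_nonneg : 0 ≤ ∏ j ∈ t, c j := by
    rw [hc_t, hc_all]; positivity
  have hft_nonneg : 0 ≤ ∏ j ∈ t, f j := Finset.prod_nonneg fun j _ => abs_nonneg _
  calc ∏ j ∈ Finset.range L, f j = (f m * f (m + 1)) * ∏ j ∈ t, f j := by rw [hsplit]; ring
    _ ≤ (1 / 4) * ∏ j ∈ t, c j := by
        apply mul_le_mul hpair hprod_le hft_nonneg (by norm_num)
    _ = (1 / 4) * ((Nat.factorial (m + 1) : ℝ) * (Nat.factorial (n - m) : ℝ)) := by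
        rw [hc_t, hc_all]
    _ ≤ (1 / 4) * (Nat.factorial n : ℝ) := by linarith
    _ = (Nat.factorial (L - 1) : ℝ) / 4 := by rw [hndef]; ring
end

section
/- Under the hypotheses of the previous statement, and with the factorization 𝒢(Ξ_⋆,Ξ_⋆) = χ^T F* D F χ where D = diag(F(𝒢)), the conjugated M2L matrix satisfies ℝ_⋆^T 𝒢(Ξ_⋆,Ξ_⋆) ℝ_⋆ = χ^T F* D̃ F χ, where D̃ = diag(F(𝒢) ∘ R*) is obtained by permuting the diagonal entries of D according to R*. -/
open Matrix Complex

def dotp (d : ℕ) (x y : Fin d → ℝ) : ℝ := ∑ k, x k * y k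

lemma dotp_add_right (d : ℕ) (u v w : Fin d → ℝ) :
    dotp d u (v + w) = dotp d u v + dotp d u w := by
  simp [dotp, mul_add, Finset.sum_add_distrib]

lemma dotp_sub_right (d : ℕ) (u v w : Fin d → ℝ) :
    dotp d u (v - w) = dotp d u v - dotp d u w := by
  simp [dotp, mul_sub, Finset.sum_sub_distrib]

lemma perm_conj_entry {ι : Type*} [Fintype ι] [DecidableEq ι] (ρ : Equiv.Perm ι)
    (M : Matrix ι ι ℂ) (i j : ι) :
    ((Matrix.of fun i j : ι => if ρ i = j then (1 : ℂ) else 0)ᵀ * M *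
      (Matrix.of fun i j : ι => if ρ i = j then (1 : ℂ) else 0)) i j
      = M (ρ.symm i) (ρ.symm j) := by
  simp only [Matrix.mul_apply, Matrix.transpose_apply, Matrix.of_apply, ite_mul, one_mul,
    zero_mul, mul_ite, mul_one, mul_zero]
  simp [← ρ.eq_symm_apply, Finset.sum_ite_eq']

lemma mid_entry {ι σ : Type*} [Fintype ι] [Fintype σ] [DecidableEq ι] [DecidableEq σ]
    (e : ι → σ) (F : Matrix σ σ ℂ) (dfun : σ → ℂ) (i j : ι) :
    ((Matrix.of fun s i => if e i = s then (1 : ℂ) else 0)ᵀ * Fᴴ * Matrix.diagonal dfun * F *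
      (Matrix.of fun s i => if e i = s then (1 : ℂ) else 0)) i j
      = ∑ ξ, (starRingEnd ℂ) (F ξ (e i)) * dfun ξ * F ξ (e j) := by
  simp only [Matrix.mul_apply, Matrix.transpose_apply, Matrix.of_apply, Matrix.conjTranspose_apply,
    Matrix.diagonal_apply, ite_mul, one_mul, zero_mul, mul_ite, mul_one, mul_zero,
    Finset.sum_ite_eq, Finset.sum_ite_eq', Finset.mem_univ, if_true, RCLike.star_def]

lemma phase_key (n : ℝ) (dd : ℂ) (a b a' b' : ℝ) (h : a - b = a' - b') :
    (starRingEnd ℂ) ((n : ℂ) * Complex.exp (-2 * Real.pi * Complex.I * (a : ℝ))) * dd *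
      ((n : ℂ) * Complex.exp (-2 * Real.pi * Complex.I * (b : ℝ)))
    = (starRingEnd ℂ) ((n : ℂ) * Complex.exp (-2 * Real.pi * Complex.I * (a' : ℝ))) * dd *
      ((n : ℂ) * Complex.exp (-2 * Real.pi * Complex.I * (b' : ℝ))) := by
  have conjexp : ∀ r : ℝ, (starRingEnd ℂ) (Complex.exp (-2 * Real.pi * Complex.I * (r : ℝ)))
      = Complex.exp (2 * Real.pi * Complex.I * (r : ℝ)) := by
    intro r
    rw [← Complex.exp_conj]
    congr 1
    simp only [_root_.map_mul, _root_.map_neg, Complex.conj_I, Complex.conj_ofReal, map_ofNat]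
    ring
  simp only [_root_.map_mul, Complex.conj_ofReal, conjexp]
  have key : ∀ x y : ℝ, Complex.exp (2 * Real.pi * Complex.I * (x : ℝ)) *
      Complex.exp (-2 * Real.pi * Complex.I * (y : ℝ))
      = Complex.exp (2 * Real.pi * Complex.I * ((x - y : ℝ) : ℝ)) := by
    intro x y
    rw [← Complex.exp_add]
    congr 1
    push_cast
    ring
  calc (n : ℂ) * Complex.exp (2 * Real.pi * Complex.I * (a : ℝ)) * dd *
      ((n : ℂ) * Complex.exp (-2 * Real.pi * Complex.I * (b : ℝ)))
      = (n : ℂ) * (n : ℂ) * dd * (Complex.exp (2 * Real.pi * Complex.I * (a : ℝ)) *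
        Complex.exp (-2 * Real.pi * Complex.I * (b : ℝ))) := by ring
    _ = (n : ℂ) * (n : ℂ) * dd * (Complex.exp (2 * Real.pi * Complex.I * (a' : ℝ)) *
        Complex.exp (-2 * Real.pi * Complex.I * (b' : ℝ))) := by rw [key, key, h]
    _ = _ := by ring

/-- With the M2L factorization `𝒢(Ξ_⋆,Ξ_⋆) = χᵀ F* D F χ`, `D = diag(F(𝒢))`, conjugating
by the grid permutation of a hyperoctahedral rotation `R` yields
`ℝ_⋆ᵀ 𝒢(Ξ_⋆,Ξ_⋆) ℝ_⋆ = χᵀ F* D̃ F χ` where `D̃ = diag(F(𝒢) ∘ R*)` is a permutation of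
the diagonal entries of `D`. -/
theorem stmt_10 {ι σ : Type*} [Fintype ι] [Fintype σ] [DecidableEq ι] [DecidableEq σ]
    (d : ℕ) (pts : σ → (Fin d → ℝ)) (hpts : Function.Injective pts)
    (e : ι → σ) (he : Function.Injective e)
    (freqs : σ → (Fin d → ℝ)) (hfreqs : Function.Injective freqs)
    (c : Fin d → ℝ) (R : (Fin d → ℝ) ≃ₗ[ℝ] (Fin d → ℝ))
    (horth : ∀ x y, dotp d (R x) (R y) = dotp d x y)
    (ρ : Equiv.Perm ι) (hρ : ∀ i, pts (e (ρ i)) = c + R (pts (e i) - c))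
    (ρs : Equiv.Perm σ) (hρs : ∀ x, pts (ρs x) = R (pts x))
    (ρf : Equiv.Perm σ) (hρf : ∀ x, freqs (ρf x) = R (freqs x))
    (G : (Fin d → ℝ) → ℂ)
    (F : Matrix σ σ ℂ)
    (hF : F = Matrix.of fun ξ x =>
      (((Fintype.card σ : ℝ) ^ (-(1 : ℝ) / 2) : ℝ) : ℂ) *
        Complex.exp (-2 * Real.pi * Complex.I * (dotp d (freqs ξ) (pts x) : ℝ)))
    (χ : Matrix σ ι ℂ)
    (hχ : χ = Matrix.of fun s i => if e i = s then (1 : ℂ) else 0)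
    (D : Matrix σ σ ℂ)
    (hD : D = Matrix.diagonal fun ξ =>
      (((Fintype.card σ : ℝ) ^ (-(1 : ℝ) / 2) : ℝ) : ℂ) *
        ∑ x : σ, G (pts x) *
          Complex.exp (-2 * Real.pi * Complex.I * (dotp d (freqs ξ) (pts x) : ℝ)))
    (hfact : Matrix.of (fun i j : ι => G (pts (e i) - pts (e j)))
      = χᵀ * Fᴴ * D * F * χ) :
    (Matrix.of fun i j : ι => if ρ i = j then (1 : ℂ) else 0)ᵀ *
        Matrix.of (fun i j : ι => G (pts (e i) - pts (e j))) *
        (Matrix.of fun i j : ι => if ρ i = j then (1 : ℂ) else 0)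
      = χᵀ * Fᴴ *
          (Matrix.diagonal fun ξ =>
            (((Fintype.card σ : ℝ) ^ (-(1 : ℝ) / 2) : ℝ) : ℂ) *
              ∑ x : σ, G (pts x) *
                Complex.exp (-2 * Real.pi * Complex.I *
                  (dotp d (R.symm (freqs ξ)) (pts x) : ℝ))) *
          F * χ := by
  subst hχ hD
  set n : ℝ := (Fintype.card σ : ℝ) ^ (-(1 : ℝ) / 2) with hn
  set dD : σ → ℂ := fun ξ => (n : ℂ) *
    ∑ x : σ, G (pts x) *
      Complex.exp (-2 * Real.pi * Complex.I * (dotp d (freqs ξ) (pts x) : ℝ)) with hdD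
  have hG : ∀ i j : ι, G (pts (e i) - pts (e j))
      = ∑ ξ, (starRingEnd ℂ) (F ξ (e i)) * dD ξ * F ξ (e j) := by
    intro i j
    have h := congrFun (congrFun hfact i) j
    rw [Matrix.of_apply] at h
    rw [h, mid_entry]
  have expand : ∀ (u p : Fin d → ℝ),
      dotp d (R u) (c + R (p - c)) = dotp d (R u) c + (dotp d u p - dotp d u c) := by
    intro u p
    rw [dotp_add_right, map_sub, dotp_sub_right d (R u) (R p) (R c), horth, horth]
  ext i j
  rw [perm_conj_entry, Matrix.of_apply, mid_entry, hG]
  rw [← Equiv.sum_comp ρf (fun ξ => (starRingEnd ℂ) (F ξ (e i)) *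
    ((n : ℂ) * ∑ x : σ, G (pts x) *
      Complex.exp (-2 * Real.pi * Complex.I * (dotp d (R.symm (freqs ξ)) (pts x) : ℝ))) *
    F ξ (e j))]
  refine Finset.sum_congr rfl fun ξ _ => ?_
  have hDD : ((n : ℂ) * ∑ x : σ, G (pts x) *
      Complex.exp (-2 * Real.pi * Complex.I * (dotp d (R.symm (freqs (ρf ξ))) (pts x) : ℝ)))
      = dD ξ := by
    rw [hdD]
    congr 1
    refine Finset.sum_congr rfl fun x _ => ?_
    rw [hρf, LinearEquiv.symm_apply_apply]
  rw [hDD]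
  subst hF
  simp only [Matrix.of_apply]
  have hpi : pts (e i) = c + R (pts (e (ρ.symm i)) - c) := by
    conv_lhs => rw [← ρ.apply_symm_apply i]
    exact hρ (ρ.symm i)
  have hpj : pts (e j) = c + R (pts (e (ρ.symm j)) - c) := by
    conv_lhs => rw [← ρ.apply_symm_apply j]
    exact hρ (ρ.symm j)
  refine phase_key n (dD ξ) (dotp d (freqs ξ) (pts (e (ρ.symm i))))
    (dotp d (freqs ξ) (pts (e (ρ.symm j)))) (dotp d (freqs (ρf ξ)) (pts (e i)))
    (dotp d (freqs (ρf ξ)) (pts (e j))) ?_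
  rw [hρf, hpi, hpj, expand, expand]
  ring
end
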